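/- Fix integers y₁, y₂ ≥ 1 and N > y₁ + y₂, and start the random walk at Z(0) = (y₁, y₂). Let v_N be an admissible solution of the Dirichlet problem on T_N with boundary data φ_N(x₁,x₂) = N − √(2/3)·x₂, and define ṽ_N(a,b) = v_N(T·(a,b)) for (a,b) ∈ ℤ² with a ≥ 0, b ≥ 0, a + b ≤ N and (a,b) not equal to (N,0) or (0,N); set f_N(z) = (1/6)·Σ_{e ∈ E} ṽ_N(z + e) − ṽ_N(z) for z ∈ D_N. Then σ_N is almost surely finite, the series Σ_{z ∈ D_N} G_N((y₁,y₂), z)·|f_N(z)| converges, and E[ṽ_N(Z(σ_N))] = ṽ_N(y₁,y₂) + Σ_{z ∈ D_N} G_N((y₁,y₂), z)·f_N(z). (The exit position Z(σ_N) almost surely avoids the points (N,0), (0,N) and (0,0), so ṽ_N(Z(σ_N)) is well defined.) -/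

import Mathlib

open MeasureTheory ProbabilityTheory Filter Real Set

/-- The step set of the three-gambler random walk. -/
def stepSet : Finset (ℤ × ℤ) := {(1, 0), (-1, 0), (0, 1), (0, -1), (1, -1), (-1, 1)}

/-- The random walk `Z(n)` started at `y`, driven by the steps `Y`. -/
def walk {Ω : Type*} (y : ℤ × ℤ) (Y : ℕ → Ω → ℤ × ℤ) (n : ℕ) (ω : Ω) : ℤ × ℤ :=
  y + ∑ i ∈ Finset.range n, Y i ω

/-- The domain `D_N = {(a,b) : a ≥ 1, b ≥ 1, a + b ≤ N - 1}`. -/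
def inDomain (N : ℕ) (z : ℤ × ℤ) : Prop :=
  1 ≤ z.1 ∧ 1 ≤ z.2 ∧ z.1 + z.2 ≤ (N : ℤ) - 1

/-- The exit time `σ_N = inf {n ≥ 1 : Z(n) ∉ D_N}`. -/
noncomputable def exitTime {Ω : Type*} (N : ℕ) (y : ℤ × ℤ) (Y : ℕ → Ω → ℤ × ℤ)
    (ω : Ω) : ℕ :=
  sInf {n : ℕ | 1 ≤ n ∧ ¬ inDomain N (walk y Y n ω)}

/-- The closed equilateral triangle `T_N` with vertices
`(0,0)`, `(√2·N, 0)`, `(N/√2, √(3/2)·N)`. -/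
def Tri (N : ℝ) : Set (ℝ × ℝ) :=
  convexHull ℝ {((0 : ℝ), (0 : ℝ)), (Real.sqrt 2 * N, 0),
    (N / Real.sqrt 2, Real.sqrt (3 / 2) * N)}

noncomputable def vertB (N : ℝ) : ℝ × ℝ := (Real.sqrt 2 * N, 0)

noncomputable def vertC (N : ℝ) : ℝ × ℝ := (N / Real.sqrt 2, Real.sqrt (3 / 2) * N)

/-- The Laplacian `∂²v/∂x₁² + ∂²v/∂x₂²` of a function on the plane. -/
noncomputable def lap (v : ℝ × ℝ → ℝ) (x : ℝ × ℝ) : ℝ :=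
  fderiv ℝ (fun y => fderiv ℝ v y (1, 0)) x (1, 0) +
    fderiv ℝ (fun y => fderiv ℝ v y (0, 1)) x (0, 1)

/-- `v` is an admissible solution of the Dirichlet problem on `T_N` with boundary data `φ`
on the edge `T_N^{(3)}` joining `vertB N` and `vertC N`. -/
def IsAdmissible (N : ℝ) (φ : ℝ × ℝ → ℝ) (v : ℝ × ℝ → ℝ) : Prop :=
  (∃ M : ℝ, ∀ x ∈ Tri N, |v x| ≤ M) ∧
  (∀ x ∈ Tri N, x ≠ vertB N → x ≠ vertC N → ContinuousWithinAt v (Tri N) x) ∧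
  ContDiffOn ℝ 2 v (interior (Tri N)) ∧
  (∀ x ∈ interior (Tri N), lap v x = 0) ∧
  (∀ x ∈ segment ℝ ((0 : ℝ), (0 : ℝ)) (vertB N), x ≠ vertB N → v x = 0) ∧
  (∀ x ∈ segment ℝ ((0 : ℝ), (0 : ℝ)) (vertC N), x ≠ vertC N → v x = 0) ∧
  (∀ x ∈ openSegment ℝ (vertB N) (vertC N), v x = φ x)

/-- The linear map `T` with rows `(√2, √2/2)` and `(0, √6/2)` applied to `(a, b)`. -/
noncomputable def Tmap (a b : ℝ) : ℝ × ℝ :=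
  (Real.sqrt 2 * a + Real.sqrt 2 / 2 * b, Real.sqrt 6 / 2 * b)

/-- The Green function `G_N(y, z)` of the walk killed at the exit time, as a real number. -/
noncomputable def green {Ω : Type*} [MeasurableSpace Ω] (μ : Measure Ω) (N : ℕ)
    (y : ℤ × ℤ) (Y : ℕ → Ω → ℤ × ℤ) (z : ℤ × ℤ) : ℝ :=
  (∑' n : ℕ, μ {ω | walk y Y n ω = z ∧ n < exitTime N y Y ω}).toReal

/-- The function `v_N` read on the lattice: `ṽ_N(a,b) = v_N(T·(a,b))`. -/
noncomputable def vLattice (v : (ℝ × ℝ) → ℝ) (z : ℤ × ℤ) : ℝ :=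
  v (Tmap (z.1 : ℝ) (z.2 : ℝ))

/-- The one-step discrete error `f_N(z) = (1/6)·Σ_{e ∈ E} ṽ_N(z+e) − ṽ_N(z)`. -/
noncomputable def fErr (v : (ℝ × ℝ) → ℝ) (z : ℤ × ℤ) : ℝ :=
  (1 / 6 : ℝ) * (∑ e ∈ stepSet, vLattice v (z + e)) - vLattice v z

/-!
Leaving `D_N` is easy: `N` consecutive steps `(1, 0)` raise `a + b` by `N` and force an exit, and
the blocks of `N` consecutive steps are independent, each of this kind with probability `6⁻¹ ^ N`.
So the walk stays in `D_N` for `n` steps with probability at most `(1 - 6⁻¹ ^ N) ^ (n / N)`; this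
makes `σ_N` almost surely finite and the Green function finite.

Since the step `Y n` is independent of the path up to time `n`, the stopped walk satisfies
`E ṽ(Z((n+1) ∧ σ)) - E ṽ(Z(n ∧ σ)) = Σ_z P(Z(n) = z, n < σ) f_N(z)` (Dynkin's formula). The
stopped walk lives in the finite set `D_N ∪ (D_N + E)`, so letting `n → ∞` by bounded convergence
on the left and summing the Green function on the right gives the identity.
-/

open scoped ENNReal Pointwise

section General

variable {Ω : Type*} [MeasurableSpace Ω]

theorem measurable_sInf_setOf {p : Ω → ℕ → Prop} (hp : ∀ n, MeasurableSet {ω | p ω n}) :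
    Measurable fun ω => sInf {n | p ω n} := by
  refine measurable_to_countable' fun m => ?_
  -- the second piece comes from the junk value `sInf ∅ = 0`
  have hpre : (fun ω => sInf {n | p ω n}) ⁻¹' {m} =
      ({ω | p ω m} ∩ ⋂ k < m, {ω | p ω k}ᶜ) ∪ {ω | m = 0} ∩ ⋂ k, {ω | p ω k}ᶜ := by
    ext ω
    simp only [mem_preimage, mem_singleton_iff, mem_union, mem_inter_iff, mem_iInter,
      mem_compl_iff, Set.mem_ofPred_eq]
    by_cases h : ∃ n, p ω n
    · classical
      rw [Nat.sInf_def (s := {n | p ω n}) h, Nat.find_eq_iff]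
      have := not_forall_not.2 h
      tauto
    · simp only [not_exists] at h
      simp [h, eq_comm]
  rw [hpre]
  exact ((hp m).inter (.biInter (to_countable _) fun k _ => (hp k).compl)).union
    ((MeasurableSet.const _).inter (.iInter fun k => (hp k).compl))

theorem ProbabilityTheory.iIndepFun.measure_inter_eq_mul_of_disjoint {ι β : Type*}
    [MeasurableSpace β] [MeasurableSingletonClass β] [Countable β] {μ : Measure Ω}
    {X : ι → Ω → β} (hind : iIndepFun X μ) (hX : ∀ i, Measurable (X i))
    {s t : Finset ι} (hst : Disjoint s t) {A B : Set Ω}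
    (hA : ∀ ω ω', (∀ i ∈ s, X i ω = X i ω') → (ω ∈ A ↔ ω' ∈ A))
    (hB : ∀ ω ω', (∀ i ∈ t, X i ω = X i ω') → (ω ∈ B ↔ ω' ∈ B)) :
    μ (A ∩ B) = μ A * μ B := by
  have preimage_image : ∀ (u : Finset ι) (C : Set Ω),
      (∀ ω ω', (∀ i ∈ u, X i ω = X i ω') → (ω ∈ C ↔ ω' ∈ C)) →
      (fun ω (i : u) => X i ω) ⁻¹' ((fun ω (i : u) => X i ω) '' C) = C := by
    intro u C hC
    refine Subset.antisymm ?_ (subset_preimage_image _ _)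
    rintro ω ⟨ω', hω', h⟩
    exact (hC ω' ω fun i hi => congrFun h ⟨i, hi⟩).1 hω'
  have h := (hind.indepFun_finset s t hst hX).measure_inter_preimage_eq_mul
    ((fun ω (i : s) => X i ω) '' A) ((fun ω (i : t) => X i ω) '' B)
    (to_countable _).measurableSet (to_countable _).measurableSet
  rwa [preimage_image s A hA, preimage_image t B hB] at h

theorem ENNReal.tsum_pow_div_ne_top {r : ℝ≥0∞} (hr : r < 1) {N : ℕ} (hN : N ≠ 0) :
    ∑' k : ℕ, r ^ (k / N) ≠ ⊤ := by
  have : NeZero N := ⟨hN⟩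
  have hdiv (p : ℕ × Fin N) : (Nat.divModEquiv N).symm p / N = p.1 := by
    change (p.1 * N + p.2) / N = p.1
    rw [add_comm, Nat.add_mul_div_right _ _ (Nat.pos_of_ne_zero hN), Nat.div_eq_of_lt p.2.is_lt,
      zero_add]
  calc ∑' k : ℕ, r ^ (k / N)
      = ∑' (j : ℕ) (_ : Fin N), r ^ j := by
        rw [← (Nat.divModEquiv N).symm.tsum_eq, ← ENNReal.tsum_prod (f := fun j _ => r ^ j)]
        simp only [hdiv]
    _ = N * (1 - r)⁻¹ := by simp [ENNReal.tsum_mul_left, ENNReal.tsum_geometric]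
    _ ≠ ⊤ := ENNReal.mul_ne_top (ENNReal.natCast_ne_top N)
        (ENNReal.inv_ne_top.2 (tsub_pos_of_lt hr).ne')

end General

theorem ne_zero_of_inDomain {N : ℕ} {y : ℤ × ℤ} (hy : inDomain N y) : N ≠ 0 := by
  obtain ⟨h₁, h₂, h₃⟩ := hy
  omega

theorem finite_setOf_inDomain (N : ℕ) : {z : ℤ × ℤ | inDomain N z}.Finite := by
  refine ((finite_Icc (1 : ℤ) N).prod (finite_Icc (1 : ℤ) N)).subset ?_
  rintro z ⟨h₁, h₂, h₃⟩
  exact ⟨⟨h₁, by omega⟩, h₂, by omega⟩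

noncomputable def domainFinset (N : ℕ) : Finset (ℤ × ℤ) := (finite_setOf_inDomain N).toFinset

theorem mem_domainFinset {N : ℕ} {z : ℤ × ℤ} : z ∈ domainFinset N ↔ inDomain N z :=
  Set.Finite.mem_toFinset _

theorem tsum_subtype_inDomain (N : ℕ) (f : ℤ × ℤ → ℝ) :
    ∑' z : {z : ℤ × ℤ // inDomain N z}, f z = ∑ z ∈ domainFinset N, f z := by
  rw [← Finset.tsum_subtype']
  exact tsum_congr_set_coe f (finite_setOf_inDomain N).coe_toFinset.symm

noncomputable def stoppedRange (N : ℕ) : Finset (ℤ × ℤ) :=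
  domainFinset N ∪ (domainFinset N + stepSet)

theorem card_stepSet : stepSet.card = 6 := rfl

section Walk

variable {Ω : Type*} {N : ℕ} {y : ℤ × ℤ} {Y : ℕ → Ω → ℤ × ℤ} {ω : Ω} {n : ℕ}

theorem walk_zero : walk y Y 0 ω = y := by
  simp [walk]

theorem walk_succ : walk y Y (n + 1) ω = walk y Y n ω + Y n ω := by
  simp [walk, Finset.sum_range_succ, add_assoc]

theorem walk_add (k : ℕ) :
    walk y Y (n + k) ω = walk y Y n ω + ∑ i ∈ Finset.range k, Y (n + i) ω := by
  simp [walk, Finset.sum_range_add, add_assoc]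

theorem walk_eq_of_forall_lt {ω' : Ω} (h : ∀ i < n, Y i ω = Y i ω') :
    walk y Y n ω = walk y Y n ω' := by
  simp only [walk]
  exact congrArg _ (Finset.sum_congr rfl fun i hi => h i (Finset.mem_range.1 hi))

def staySet (N : ℕ) (y : ℤ × ℤ) (Y : ℕ → Ω → ℤ × ℤ) (n : ℕ) : Set Ω :=
  {ω | ∀ m ≤ n, inDomain N (walk y Y m ω)}

def exitSet (N : ℕ) (y : ℤ × ℤ) (Y : ℕ → Ω → ℤ × ℤ) : Set Ω :=
  {ω | ∃ n : ℕ, 1 ≤ n ∧ ¬ inDomain N (walk y Y n ω)}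

def visitSet (N : ℕ) (y : ℤ × ℤ) (Y : ℕ → Ω → ℤ × ℤ) (n : ℕ) (z : ℤ × ℤ) : Set Ω :=
  {ω | walk y Y n ω = z} ∩ staySet N y Y n

theorem staySet_anti {m : ℕ} (h : m ≤ n) : staySet N y Y n ⊆ staySet N y Y m :=
  fun _ hω k hk => hω k (hk.trans h)

theorem compl_exitSet_subset_staySet (hy : inDomain N y) :
    (exitSet N y Y)ᶜ ⊆ staySet N y Y n := by
  intro ω hω m _
  rcases Nat.eq_zero_or_pos m with rfl | hm
  · rwa [walk_zero]
  · by_contra h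
    exact hω ⟨m, hm, h⟩

theorem exitTime_spec (h : ω ∈ exitSet N y Y) :
    1 ≤ exitTime N y Y ω ∧ ¬ inDomain N (walk y Y (exitTime N y Y ω) ω) :=
  Nat.sInf_mem h

theorem exitTime_eq_zero_of_notMem (h : ω ∉ exitSet N y Y) : exitTime N y Y ω = 0 :=
  Nat.sInf_eq_zero.2 (Or.inr (eq_empty_of_forall_notMem fun k hk => h ⟨k, hk⟩))

theorem lt_exitTime_iff (hy : inDomain N y) :
    n < exitTime N y Y ω ↔ ω ∈ exitSet N y Y ∧ ω ∈ staySet N y Y n := by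
  constructor
  · intro h
    have hexit : ω ∈ exitSet N y Y := by
      by_contra hω
      rw [exitTime_eq_zero_of_notMem hω] at h
      omega
    refine ⟨hexit, fun m hm => ?_⟩
    rcases Nat.eq_zero_or_pos m with rfl | hm0
    · rwa [walk_zero]
    · by_contra hout
      have : exitTime N y Y ω ≤ m := Nat.sInf_le ⟨hm0, hout⟩
      omega
  · rintro ⟨hexit, hstay⟩
    by_contra h
    exact (exitTime_spec hexit).2 (hstay _ (not_lt.1 h))

theorem mem_staySet_congr {ω' : Ω} (h : ∀ i < n, Y i ω = Y i ω') :
    ω ∈ staySet N y Y n ↔ ω' ∈ staySet N y Y n :=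
  forall₂_congr fun m hm => by rw [walk_eq_of_forall_lt fun i hi => h i (by omega)]

def rightRun (Y : ℕ → Ω → ℤ × ℤ) (n k : ℕ) : Set Ω :=
  {ω | ∀ i < k, Y (n + i) ω = (1, 0)}

theorem staySet_add_subset (n : ℕ) :
    staySet N y Y (n + N) ⊆ staySet N y Y n ∩ (rightRun Y n N)ᶜ := by
  intro ω hω
  refine ⟨staySet_anti (Nat.le_add_right n N) hω, fun hrun => ?_⟩
  have hjump : walk y Y (n + N) ω = walk y Y n ω + ((N : ℤ), 0) := by
    rw [walk_add, Finset.sum_congr rfl fun i hi => hrun i (Finset.mem_range.1 hi)]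
    simp
  obtain ⟨ha, hb, -⟩ := hω n (Nat.le_add_right n N)
  obtain ⟨-, -, hsum⟩ := hω (n + N) le_rfl
  rw [hjump, Prod.fst_add, Prod.snd_add] at hsum
  simp only [add_zero] at hsum
  omega

theorem walk_min_exitTime_mem_stoppedRange (hy : inDomain N y) (hexit : ω ∈ exitSet N y Y)
    (hsteps : ∀ m, Y m ω ∈ stepSet) (n : ℕ) :
    walk y Y (min n (exitTime N y Y ω)) ω ∈ stoppedRange N := by
  rcases (min_le_right n (exitTime N y Y ω)).lt_or_eq with hlt | heq
  · exact Finset.mem_union_left _ (mem_domainFinset.2 (((lt_exitTime_iff hy).1 hlt).2 _ le_rfl))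
  · obtain ⟨k, hk⟩ : ∃ k, exitTime N y Y ω = k + 1 :=
      ⟨_, (Nat.succ_pred_eq_of_pos (exitTime_spec hexit).1).symm⟩
    rw [heq, hk, walk_succ]
    refine Finset.mem_union_right _ (Finset.add_mem_add (mem_domainFinset.2 ?_) (hsteps k))
    exact ((lt_exitTime_iff hy).1 (by omega)).2 k le_rfl

theorem vLattice_walk_min_succ_sub (v : ℝ × ℝ → ℝ) (hy : inDomain N y)
    (hexit : ω ∈ exitSet N y Y) (hstep : Y n ω ∈ stepSet) :
    vLattice v (walk y Y (min (n + 1) (exitTime N y Y ω)) ω) -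
        vLattice v (walk y Y (min n (exitTime N y Y ω)) ω) =
      ∑ p ∈ domainFinset N ×ˢ stepSet, (visitSet N y Y n p.1 ∩ {ω | Y n ω = p.2}).indicator
        (fun _ => vLattice v (p.1 + p.2) - vLattice v p.1) ω := by
  by_cases hlt : n < exitTime N y Y ω
  · have hstay := ((lt_exitTime_iff hy).1 hlt).2
    rw [min_eq_left hlt, min_eq_left hlt.le, walk_succ, Finset.sum_eq_single_of_mem
      (walk y Y n ω, Y n ω) (Finset.mem_product.2 ⟨mem_domainFinset.2 (hstay n le_rfl), hstep⟩)]
    · have hmem : ω ∈ visitSet N y Y n (walk y Y n ω) ∩ {ω' | Y n ω' = Y n ω} := ⟨⟨rfl, hstay⟩, rfl⟩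
      dsimp only
      rw [indicator_of_mem hmem]
    · rintro p - hp
      refine indicator_of_notMem (fun hω => hp ?_) _
      obtain ⟨⟨h₁, -⟩, h₂⟩ := hω
      exact Prod.ext h₁.symm h₂.symm
  · rw [not_lt] at hlt
    rw [min_eq_right (hlt.trans n.le_succ), min_eq_right hlt, sub_self]
    refine (Finset.sum_eq_zero fun p _ => indicator_of_notMem (fun hω => ?_) _).symm
    exact (exitTime_spec hexit).2 (hω.1.2 _ hlt)

end Walk

section Measurability

variable {Ω : Type*} [MeasurableSpace Ω] {N : ℕ} {y : ℤ × ℤ} {Y : ℕ → Ω → ℤ × ℤ}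

theorem measurable_walk (hY : ∀ n, Measurable (Y n)) (n : ℕ) : Measurable (walk y Y n) :=
  measurable_const.add (Finset.measurable_sum _ fun i _ => hY i)

theorem measurable_walk_comp (hY : ∀ n, Measurable (Y n)) {τ : Ω → ℕ} (hτ : Measurable τ) :
    Measurable fun ω => walk y Y (τ ω) ω :=
  (measurable_from_prod_countable_left (f := fun p : Ω × ℕ => walk y Y p.2 p.1)
    (measurable_walk hY)).comp (measurable_id.prodMk hτ)

theorem measurableSet_setOf_walk (hY : ∀ n, Measurable (Y n)) (n : ℕ) (P : ℤ × ℤ → Prop) :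
    MeasurableSet {ω | P (walk y Y n ω)} :=
  measurable_walk hY n (MeasurableSet.of_discrete (s := {z | P z}))

theorem measurableSet_staySet (hY : ∀ n, Measurable (Y n)) (n : ℕ) :
    MeasurableSet (staySet N y Y n) := by
  simp only [staySet, ofPred_forall]
  exact .iInter fun m => .iInter fun _ => measurableSet_setOf_walk hY m _

theorem measurableSet_exitSet (hY : ∀ n, Measurable (Y n)) : MeasurableSet (exitSet N y Y) := by
  simp only [exitSet, ofPred_exists]
  exact .iUnion fun n => measurableSet_setOf_walk hY n (fun z => 1 ≤ n ∧ ¬ inDomain N z)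

theorem measurableSet_visitSet (hY : ∀ n, Measurable (Y n)) (n : ℕ) (z : ℤ × ℤ) :
    MeasurableSet (visitSet N y Y n z) :=
  (measurable_walk hY n (measurableSet_singleton z)).inter (measurableSet_staySet hY n)

theorem measurable_exitTime (hY : ∀ n, Measurable (Y n)) : Measurable (exitTime N y Y) :=
  measurable_sInf_setOf fun n => measurableSet_setOf_walk hY n (fun z => 1 ≤ n ∧ ¬ inDomain N z)

theorem measurableSet_rightRun (hY : ∀ n, Measurable (Y n)) (n k : ℕ) :
    MeasurableSet (rightRun Y n k) := by
  simp only [rightRun, ofPred_forall]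
  exact .iInter fun i => .iInter fun _ => hY (n + i) (measurableSet_singleton _)

end Measurability

structure IsUniformStepSeq {Ω : Type*} [MeasurableSpace Ω] (μ : Measure Ω)
    (Y : ℕ → Ω → ℤ × ℤ) : Prop where
  measurable : ∀ n, Measurable (Y n)
  indep : iIndepFun Y μ
  measure_eq : ∀ n e, μ {ω | Y n ω = e} = if e ∈ stepSet then (6 : ℝ≥0∞)⁻¹ else 0

theorem one_sub_inv_six_pow_lt_one (N : ℕ) : 1 - (6 : ℝ≥0∞)⁻¹ ^ N < 1 :=
  ENNReal.sub_lt_self ENNReal.one_ne_top one_ne_zero (pow_ne_zero N (by simp))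

section Exit

variable {Ω : Type*} [MeasurableSpace Ω] {μ : Measure Ω} {N : ℕ} {y : ℤ × ℤ}
  {Y : ℕ → Ω → ℤ × ℤ}

theorem IsUniformStepSeq.measure_rightRun (hY : IsUniformStepSeq μ Y) (n k : ℕ) :
    μ (rightRun Y n k) = 6⁻¹ ^ k := by
  have hrun : rightRun Y n k = ⋂ i ∈ Finset.range k, Y (n + i) ⁻¹' {(1, 0)} := by
    ext ω
    simp [rightRun]
  have hright (i : ℕ) : μ (Y (n + i) ⁻¹' {(1, 0)}) = 6⁻¹ :=
    (hY.measure_eq (n + i) (1, 0)).trans (if_pos (by decide))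
  rw [hrun, (hY.indep.precomp (add_right_injective n)).meas_biInter
    fun i _ => ⟨_, measurableSet_singleton _, rfl⟩]
  simp [hright]

theorem IsUniformStepSeq.measure_staySet_add_le (hY : IsUniformStepSeq μ Y) (n : ℕ) :
    μ (staySet N y Y (n + N)) ≤ (1 - 6⁻¹ ^ N) * μ (staySet N y Y n) := by
  have := hY.indep.isProbabilityMeasure
  have hindep : μ (staySet N y Y n ∩ (rightRun Y n N)ᶜ) =
      μ (staySet N y Y n) * μ (rightRun Y n N)ᶜ := by
    refine hY.indep.measure_inter_eq_mul_of_disjoint hY.measurable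
      (s := Finset.range n) (t := Finset.Ico n (n + N))
      (Finset.disjoint_left.2 fun i hi hi' => by simp at hi hi'; omega) ?_ ?_
    · exact fun ω ω' h => mem_staySet_congr fun i hi => h i (Finset.mem_range.2 hi)
    · intro ω ω' h
      simp only [rightRun, mem_compl_iff, Set.mem_ofPred_eq]
      exact not_congr (forall₂_congr fun i hi => by rw [h (n + i) (by simp; omega)])
  calc μ (staySet N y Y (n + N))
      ≤ μ (staySet N y Y n ∩ (rightRun Y n N)ᶜ) := measure_mono (staySet_add_subset n)
    _ = (1 - 6⁻¹ ^ N) * μ (staySet N y Y n) := by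
      rw [hindep, prob_compl_eq_one_sub (measurableSet_rightRun hY.measurable n N),
        hY.measure_rightRun, mul_comm]

theorem IsUniformStepSeq.measure_staySet_mul_le (hY : IsUniformStepSeq μ Y) (m : ℕ) :
    μ (staySet N y Y (m * N)) ≤ (1 - 6⁻¹ ^ N) ^ m := by
  induction m with
  | zero =>
    have := hY.indep.isProbabilityMeasure
    simpa using prob_le_one
  | succ m ih =>
    calc μ (staySet N y Y ((m + 1) * N))
        ≤ (1 - 6⁻¹ ^ N) * μ (staySet N y Y (m * N)) := by
          rw [add_one_mul]
          exact hY.measure_staySet_add_le _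
      _ ≤ (1 - 6⁻¹ ^ N) ^ (m + 1) := by
          rw [pow_succ']
          gcongr

theorem IsUniformStepSeq.measure_staySet_le (hY : IsUniformStepSeq μ Y) (n : ℕ) :
    μ (staySet N y Y n) ≤ (1 - 6⁻¹ ^ N) ^ (n / N) :=
  (measure_mono (staySet_anti (Nat.div_mul_le_self n N))).trans (hY.measure_staySet_mul_le _)

theorem IsUniformStepSeq.measure_compl_exitSet (hY : IsUniformStepSeq μ Y)
    (hy : inDomain N y) : μ (exitSet N y Y)ᶜ = 0 :=
  le_antisymm (ge_of_tendsto'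
    (ENNReal.tendsto_pow_atTop_nhds_zero_of_lt_one (one_sub_inv_six_pow_lt_one N)) fun m =>
      (measure_mono (compl_exitSet_subset_staySet hy)).trans (hY.measure_staySet_mul_le m))
    bot_le

theorem IsUniformStepSeq.measure_exitSet (hY : IsUniformStepSeq μ Y) (hy : inDomain N y) :
    μ (exitSet N y Y) = 1 := by
  have := hY.indep.isProbabilityMeasure
  exact (prob_compl_eq_zero_iff (measurableSet_exitSet hY.measurable)).1
    (hY.measure_compl_exitSet hy)

theorem IsUniformStepSeq.ae_mem_exitSet (hY : IsUniformStepSeq μ Y) (hy : inDomain N y) :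
    ∀ᵐ ω ∂μ, ω ∈ exitSet N y Y :=
  hY.measure_compl_exitSet hy

theorem IsUniformStepSeq.tsum_measure_staySet_ne_top (hY : IsUniformStepSeq μ Y)
    (hy : inDomain N y) : ∑' n, μ (staySet N y Y n) ≠ ⊤ :=
  ne_top_of_le_ne_top
    (ENNReal.tsum_pow_div_ne_top (one_sub_inv_six_pow_lt_one N) (ne_zero_of_inDomain hy))
    (ENNReal.tsum_le_tsum hY.measure_staySet_le)

end Exit

section Expectation

variable {Ω : Type*} [MeasurableSpace Ω] {μ : Measure Ω} {N : ℕ} {y : ℤ × ℤ}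
  {Y : ℕ → Ω → ℤ × ℤ}

theorem IsUniformStepSeq.measure_walk_eq_lt_exitTime (hY : IsUniformStepSeq μ Y)
    (hy : inDomain N y) (n : ℕ) (z : ℤ × ℤ) :
    μ {ω | walk y Y n ω = z ∧ n < exitTime N y Y ω} = μ (visitSet N y Y n z) := by
  have hset : {ω | walk y Y n ω = z ∧ n < exitTime N y Y ω} =
      visitSet N y Y n z ∩ exitSet N y Y := by
    ext ω
    simp only [Set.mem_ofPred_eq, lt_exitTime_iff hy, visitSet, mem_inter_iff]
    tauto
  rw [hset, measure_inter_conull (hY.measure_compl_exitSet hy)]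

theorem IsUniformStepSeq.hasSum_green (hY : IsUniformStepSeq μ Y) (hy : inDomain N y)
    (z : ℤ × ℤ) : HasSum (fun n => μ.real (visitSet N y Y n z)) (green μ N y Y z) := by
  have := hY.indep.isProbabilityMeasure
  have hfin : ∑' n, μ (visitSet N y Y n z) ≠ ⊤ :=
    ne_top_of_le_ne_top (hY.tsum_measure_staySet_ne_top hy)
      (ENNReal.tsum_le_tsum fun n => measure_mono inter_subset_right)
  rw [green, tsum_congr (hY.measure_walk_eq_lt_exitTime hy · z),
    ENNReal.tsum_toReal_eq fun _ => measure_ne_top _ _]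
  exact ENNReal.hasSum_toReal hfin

theorem IsUniformStepSeq.ae_forall_mem_stepSet (hY : IsUniformStepSeq μ Y) :
    ∀ᵐ ω ∂μ, ∀ n, Y n ω ∈ stepSet := by
  refine ae_all_iff.2 fun n => ae_iff.2 ?_
  have hsplit : {ω | Y n ω ∉ stepSet} = ⋃ (e) (_ : e ∉ stepSet), {ω | Y n ω = e} := by
    ext
    simp
  rw [hsplit]
  exact measure_iUnion_null fun e => measure_iUnion_null fun he => by
    rw [hY.measure_eq, if_neg he]

theorem IsUniformStepSeq.ae_abs_vLattice_walk_min_le (hY : IsUniformStepSeq μ Y)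
    (hy : inDomain N y) (v : ℝ × ℝ → ℝ) :
    ∀ᵐ ω ∂μ, ∀ n, |vLattice v (walk y Y (min n (exitTime N y Y ω)) ω)| ≤
      ∑ w ∈ stoppedRange N, |vLattice v w| := by
  filter_upwards [hY.ae_mem_exitSet hy, hY.ae_forall_mem_stepSet] with ω hexit hsteps n
  exact Finset.single_le_sum (f := fun w => |vLattice v w|) (fun _ _ => abs_nonneg _)
    (walk_min_exitTime_mem_stoppedRange hy hexit hsteps n)

theorem measurable_vLattice_walk_min (hY : ∀ n, Measurable (Y n)) (v : ℝ × ℝ → ℝ) (n : ℕ) :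
    Measurable fun ω => vLattice v (walk y Y (min n (exitTime N y Y ω)) ω) :=
  (measurable_of_countable (vLattice v)).comp (measurable_walk_comp hY
    ((measurable_of_countable (min n)).comp (measurable_exitTime hY)))

theorem IsUniformStepSeq.integrable_vLattice_walk_min (hY : IsUniformStepSeq μ Y)
    (hy : inDomain N y) (v : ℝ × ℝ → ℝ) (n : ℕ) :
    Integrable (fun ω => vLattice v (walk y Y (min n (exitTime N y Y ω)) ω)) μ := by
  have := hY.indep.isProbabilityMeasure
  refine (integrable_const (∑ w ∈ stoppedRange N, |vLattice v w|)).mono'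
    (measurable_vLattice_walk_min hY.measurable v n).aestronglyMeasurable ?_
  filter_upwards [hY.ae_abs_vLattice_walk_min_le hy v] with ω hω using hω n

theorem IsUniformStepSeq.measureReal_visitSet_inter_step (hY : IsUniformStepSeq μ Y) (n : ℕ)
    (z : ℤ × ℤ) {e : ℤ × ℤ} (he : e ∈ stepSet) :
    μ.real (visitSet N y Y n z ∩ {ω | Y n ω = e}) = μ.real (visitSet N y Y n z) / 6 := by
  have hmul : μ (visitSet N y Y n z ∩ {ω | Y n ω = e}) =
      μ (visitSet N y Y n z) * μ {ω | Y n ω = e} := by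
    refine hY.indep.measure_inter_eq_mul_of_disjoint hY.measurable (s := Finset.range n)
      (t := {n}) (by simp) (fun ω ω' h => ?_) (fun ω ω' h => ?_)
    · have h' (i : ℕ) (hi : i < n) : Y i ω = Y i ω' := h i (Finset.mem_range.2 hi)
      simp only [visitSet, mem_inter_iff, Set.mem_ofPred_eq,
        walk_eq_of_forall_lt h', mem_staySet_congr h']
    · simp only [Set.mem_ofPred_eq, h n (Finset.mem_singleton_self n)]
  simp [measureReal_def, hmul, hY.measure_eq, he, ENNReal.toReal_mul, div_eq_mul_inv]

theorem IsUniformStepSeq.integral_vLattice_walk_min_succ (hY : IsUniformStepSeq μ Y)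
    (hy : inDomain N y) (v : ℝ × ℝ → ℝ) (n : ℕ) :
    ∫ ω, vLattice v (walk y Y (min (n + 1) (exitTime N y Y ω)) ω) ∂μ =
      ∫ ω, vLattice v (walk y Y (min n (exitTime N y Y ω)) ω) ∂μ +
        ∑ z ∈ domainFinset N, μ.real (visitSet N y Y n z) * fErr v z := by
  have := hY.indep.isProbabilityMeasure
  have hmeas (p : (ℤ × ℤ) × (ℤ × ℤ)) :
      MeasurableSet (visitSet N y Y n p.1 ∩ {ω | Y n ω = p.2}) :=
    (measurableSet_visitSet hY.measurable n p.1).inter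
      (hY.measurable n (measurableSet_singleton _))
  rw [← sub_eq_iff_eq_add', ← integral_sub (hY.integrable_vLattice_walk_min hy v _)
    (hY.integrable_vLattice_walk_min hy v _)]
  calc _ = ∫ ω, ∑ p ∈ domainFinset N ×ˢ stepSet,
          (visitSet N y Y n p.1 ∩ {ω | Y n ω = p.2}).indicator
            (fun _ => vLattice v (p.1 + p.2) - vLattice v p.1) ω ∂μ := by
        refine integral_congr_ae ?_
        filter_upwards [hY.ae_mem_exitSet hy, hY.ae_forall_mem_stepSet] with ω hexit hsteps
          using vLattice_walk_min_succ_sub v hy hexit (hsteps n)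
    _ = ∑ p ∈ domainFinset N ×ˢ stepSet, μ.real (visitSet N y Y n p.1 ∩ {ω | Y n ω = p.2}) *
          (vLattice v (p.1 + p.2) - vLattice v p.1) := by
        rw [integral_finsetSum _ fun p _ => (integrable_const _).indicator (hmeas p)]
        simp only [integral_indicator_const _ (hmeas _), smul_eq_mul]
    _ = ∑ z ∈ domainFinset N, μ.real (visitSet N y Y n z) * fErr v z := by
        rw [Finset.sum_product]
        refine Finset.sum_congr rfl fun z _ => ?_
        dsimp only
        rw [Finset.sum_congr rfl fun e he => by rw [hY.measureReal_visitSet_inter_step n z he],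
          ← Finset.mul_sum, Finset.sum_sub_distrib, Finset.sum_const, card_stepSet, fErr]
        ring

theorem IsUniformStepSeq.integral_vLattice_walk_min (hY : IsUniformStepSeq μ Y)
    (hy : inDomain N y) (v : ℝ × ℝ → ℝ) (n : ℕ) :
    ∫ ω, vLattice v (walk y Y (min n (exitTime N y Y ω)) ω) ∂μ =
      vLattice v y + ∑ k ∈ Finset.range n, ∑ z ∈ domainFinset N,
        μ.real (visitSet N y Y k z) * fErr v z := by
  induction n with
  | zero =>
    have := hY.indep.isProbabilityMeasure
    simp [walk_zero]
  | succ n ih =>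
    rw [hY.integral_vLattice_walk_min_succ hy, ih, Finset.sum_range_succ, add_assoc]

theorem IsUniformStepSeq.tendsto_integral_vLattice_walk_min (hY : IsUniformStepSeq μ Y)
    (hy : inDomain N y) (v : ℝ × ℝ → ℝ) :
    Tendsto (fun n => ∫ ω, vLattice v (walk y Y (min n (exitTime N y Y ω)) ω) ∂μ) atTop
      (nhds (∫ ω, vLattice v (walk y Y (exitTime N y Y ω) ω) ∂μ)) := by
  have := hY.indep.isProbabilityMeasure
  refine tendsto_integral_of_dominated_convergence (fun _ => ∑ w ∈ stoppedRange N, |vLattice v w|)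
    (fun n => (measurable_vLattice_walk_min hY.measurable v n).aestronglyMeasurable)
    (integrable_const _) (fun n => ?_)
    (.of_forall fun ω => tendsto_atTop_of_eventually_const fun n hn => by rw [min_eq_right hn])
  filter_upwards [hY.ae_abs_vLattice_walk_min_le hy v] with ω hω
  exact (Real.norm_eq_abs _).trans_le (hω n)

end Expectation

theorem expectation_at_exit_via_green_function_general
    {Ω : Type*} [MeasurableSpace Ω] (μ : Measure Ω)
    (Y : ℕ → Ω → ℤ × ℤ) (hmeas : ∀ n, Measurable (Y n))
    (hindep : iIndepFun Y μ)
    (hdist : ∀ n, ∀ e : ℤ × ℤ,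
      μ {ω | Y n ω = e} = if e ∈ stepSet then (6 : ENNReal)⁻¹ else 0)
    (y₁ y₂ : ℤ) (hy₁ : 1 ≤ y₁) (hy₂ : 1 ≤ y₂)
    (N : ℕ) (hN : y₁ + y₂ < (N : ℤ))
    (v : (ℝ × ℝ) → ℝ) :
    μ {ω | ∃ n : ℕ, 1 ≤ n ∧ ¬ inDomain N (walk (y₁, y₂) Y n ω)} = 1 ∧
    Summable (fun z : {z : ℤ × ℤ // inDomain N z} =>
      green μ N (y₁, y₂) Y z.val * |fErr v z.val|) ∧
    ∫ ω, vLattice v (walk (y₁, y₂) Y (exitTime N (y₁, y₂) Y ω) ω) ∂μ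
      = vLattice v (y₁, y₂) +
        ∑' z : {z : ℤ × ℤ // inDomain N z},
          green μ N (y₁, y₂) Y z.val * fErr v z.val := by
  have hY : IsUniformStepSeq μ Y := ⟨hmeas, hindep, hdist⟩
  have hy : inDomain N (y₁, y₂) := ⟨hy₁, hy₂, by omega⟩
  have : Finite {z : ℤ × ℤ // inDomain N z} := (finite_setOf_inDomain N).to_subtype
  refine ⟨hY.measure_exitSet hy, .of_finite, ?_⟩
  have hgreen : HasSum
      (fun k => ∑ z ∈ domainFinset N, μ.real (visitSet N (y₁, y₂) Y k z) * fErr v z)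
      (∑ z ∈ domainFinset N, green μ N (y₁, y₂) Y z * fErr v z) :=
    hasSum_sum fun z _ => (hY.hasSum_green hy z).mul_right _
  rw [tsum_subtype_inDomain N fun z => green μ N (y₁, y₂) Y z * fErr v z]
  refine tendsto_nhds_unique (hY.tendsto_integral_vLattice_walk_min hy v) ?_
  simp_rw [hY.integral_vLattice_walk_min hy v]
  exact hgreen.tendsto_sum_nat.const_add _

theorem expectation_at_exit_via_green_function
    {Ω : Type*} [MeasurableSpace Ω] (μ : Measure Ω) [IsProbabilityMeasure μ]
    (Y : ℕ → Ω → ℤ × ℤ) (hmeas : ∀ n, Measurable (Y n))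
    (hindep : iIndepFun Y μ)
    (hdist : ∀ n, ∀ e : ℤ × ℤ,
      μ {ω | Y n ω = e} = if e ∈ stepSet then (6 : ENNReal)⁻¹ else 0)
    (y₁ y₂ : ℤ) (hy₁ : 1 ≤ y₁) (hy₂ : 1 ≤ y₂)
    (N : ℕ) (hN : y₁ + y₂ < (N : ℤ))
    (v : (ℝ × ℝ) → ℝ)
    (hv : IsAdmissible N (fun p => (N : ℝ) - Real.sqrt (2 / 3) * p.2) v) :
    μ {ω | ∃ n : ℕ, 1 ≤ n ∧ ¬ inDomain N (walk (y₁, y₂) Y n ω)} = 1 ∧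
    Summable (fun z : {z : ℤ × ℤ // inDomain N z} =>
      green μ N (y₁, y₂) Y z.val * |fErr v z.val|) ∧
    ∫ ω, vLattice v (walk (y₁, y₂) Y (exitTime N (y₁, y₂) Y ω) ω) ∂μ
      = vLattice v (y₁, y₂) +
        ∑' z : {z : ℤ × ℤ // inDomain N z},
          green μ N (y₁, y₂) Y z.val * fErr v z.val :=
  expectation_at_exit_via_green_function_general μ Y hmeas hindep hdist y₁ y₂ hy₁ hy₂ N hN v
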